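/- Let β > 0, c₀ ∈ ℝ, g(J) = βJ(c₀ - ln J) for J > 0 with g(0)=0, and let χ be defined by χ(0)=0, χ(y) = -y(ln y - c₀) for 0 < y ≤ exp(-2+c₀), χ(y) = y + exp(-2+c₀) for y > exp(-2+c₀). Then for all J₁, J₂ ≥ 0, sign(J₁ - J₂)·(g(J₁) - g(J₂)) ≤ β·χ(|J₁ - J₂|). -/
import Mathlib


noncomputable def chi (c₀ : ℝ) : ℝ → ℝ := fun y =>
  if y ≤ 0 then 0
  else if y ≤ Real.exp (-2 + c₀) then -y * (Real.log y - c₀)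
  else y + Real.exp (-2 + c₀)

noncomputable def g (β c₀ : ℝ) : ℝ → ℝ := fun J => β * J * (c₀ - Real.log J)

lemma superadd_xlogx (a b : ℝ) (ha : 0 ≤ a) (hb : 0 ≤ b) :
    a * Real.log a + b * Real.log b ≤ (a + b) * Real.log (a + b) := by
  rcases ha.eq_or_lt with h | ha'
  · simp [← h]
  rcases hb.eq_or_lt with h | hb'
  · simp [← h]
  have h1 : a * Real.log a ≤ a * Real.log (a + b) :=
    mul_le_mul_of_nonneg_left (Real.log_le_log ha' (by linarith)) ha
  have h2 : b * Real.log b ≤ b * Real.log (a + b) :=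
    mul_le_mul_of_nonneg_left (Real.log_le_log hb' (by linarith)) hb
  nlinarith [h1, h2]

lemma key_ineq (β c₀ J₁ J₂ : ℝ) (hβ : 0 < β) (h₂ : 0 ≤ J₂) (h : J₂ < J₁) :
    g β c₀ J₁ - g β c₀ J₂ ≤ β * chi c₀ (J₁ - J₂) := by
  set d := J₁ - J₂ with hd
  have hd0 : 0 < d := by simp [hd]; linarith
  have step1 : g β c₀ J₁ - g β c₀ J₂ ≤ β * (d * (c₀ - Real.log d)) := by
    have hs := superadd_xlogx J₂ d h₂ hd0.le
    have hJ : J₁ = J₂ + d := by rw [hd]; ring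
    unfold g
    rw [hJ]
    nlinarith [hs]
  have step2 : d * (c₀ - Real.log d) ≤ chi c₀ d := by
    unfold chi
    rw [if_neg (not_le.2 hd0)]
    split_ifs with h'
    · exact le_of_eq (by ring)
    · push_neg at h'
      have hl : -2 + c₀ < Real.log d := (Real.lt_log_iff_exp_lt hd0).2 h'
      set s := Real.log d - (-2 + c₀) with hsdef
      have hs0 : 0 < s := by simp [hsdef]; linarith
      have hlog : Real.log d = -2 + c₀ + s := by rw [hsdef]; ring
      have hde : d = Real.exp (-2 + c₀) * Real.exp s := by
        rw [← Real.exp_add, ← Real.exp_log hd0, hlog]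
      have h1 : 1 - s ≤ Real.exp (-s) := by
        have := Real.add_one_le_exp (-s); linarith
      have h2 : Real.exp s * (1 - s) ≤ 1 := by
        have := mul_le_mul_of_nonneg_left h1 (Real.exp_pos s).le
        rwa [← Real.exp_add, add_neg_cancel, Real.exp_zero] at this
      rw [hlog, hde]
      have h3 := mul_le_mul_of_nonneg_left h2 (Real.exp_pos (-2 + c₀)).le
      nlinarith [Real.exp_pos (-2 + c₀), Real.exp_pos s]
  calc g β c₀ J₁ - g β c₀ J₂ ≤ β * (d * (c₀ - Real.log d)) := step1
    _ ≤ β * chi c₀ d := by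
        exact mul_le_mul_of_nonneg_left step2 hβ.le

theorem stmt_7 (β c₀ : ℝ) (hβ : 0 < β) (J₁ J₂ : ℝ) (h₁ : 0 ≤ J₁) (h₂ : 0 ≤ J₂) :
    Real.sign (J₁ - J₂) * (g β c₀ J₁ - g β c₀ J₂) ≤ β * chi c₀ |J₁ - J₂| := by
  rcases lt_trichotomy J₁ J₂ with h | h | h
  · rw [Real.sign_of_neg (by linarith), abs_of_neg (by linarith), neg_sub]
    have := key_ineq β c₀ J₂ J₁ hβ h₁ h
    linarith
  · subst h
    simp [chi]
  · rw [Real.sign_of_pos (by linarith), abs_of_pos (by linarith), one_mul]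
    exact key_ineq β c₀ J₁ J₂ hβ h₂ h
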